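/- arXiv:1308.5055 — 3 statements merged into one kernel-verified Lean document; each statement's English description precedes it below -/
import Mathlib

section
/- Let 0 < ρ < 1, let I be a bounded interval and A ⊆ I a measurable subset with Lebesgue measure |A| ≥ ρ|I|. Then for every polynomial Q of degree at most k-1 there is a constant c depending only on k and ρ such that sup_{t ∈ I} |Q(t)| ≤ c · sup_{t ∈ A} |Q(t)|. -/
/-!
Pick `k` points of `A` that are `δ`-separated with `δ` comparable to `|A| / k`: the cumulative
volume `u ↦ |A ∩ (-∞, u]|` is continuous, nondecreasing and `1`-Lipschitz, so points of `A` at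
which it lies in the disjoint windows `[2iδ, (2i+1)δ]` are at mutual distance at least `δ`.
Lagrange interpolation at these nodes writes `Q` through its values on `A`, and each Lagrange
basis polynomial is bounded on `I` by `(|I| / δ) ^ (k - 1)`.
-/

open MeasureTheory Set Polynomial

section LagrangeBound

variable {ι : Type*} [Fintype ι] [DecidableEq ι] {x : ι → ℝ} {δ L t : ℝ}

theorem abs_eval_lagrangeBasis_le (hδ : 0 < δ) (hsep : ∀ i j, i ≠ j → δ ≤ |x i - x j|)
    (ht : ∀ j, |t - x j| ≤ L) (i : ι) :
    |(Lagrange.basis Finset.univ x i).eval t| ≤ (L / δ) ^ (Fintype.card ι - 1) := by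
  rw [Lagrange.basis, eval_prod, Finset.abs_prod, ← Finset.card_univ,
    ← Finset.card_erase_of_mem (Finset.mem_univ i), ← Finset.prod_const]
  refine Finset.prod_le_prod (fun _ _ => abs_nonneg _) fun j hj => ?_
  have hji : j ≠ i := Finset.ne_of_mem_erase hj
  have hev : (Lagrange.basisDivisor (x i) (x j)).eval t = (t - x j) / (x i - x j) := by
    simp [Lagrange.basisDivisor, div_eq_inv_mul]
  rw [hev, abs_div]
  exact div_le_div₀ ((abs_nonneg _).trans (ht j)) (ht j) hδ (hsep i j hji.symm)

theorem abs_eval_le_of_separated {Q : ℝ[X]} {M : ℝ} (hQ : Q.degree < Fintype.card ι)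
    (hδ : 0 < δ) (hsep : ∀ i j, i ≠ j → δ ≤ |x i - x j|) (ht : ∀ j, |t - x j| ≤ L)
    (hM : ∀ i, |Q.eval (x i)| ≤ M) :
    |Q.eval t| ≤ Fintype.card ι * (L / δ) ^ (Fintype.card ι - 1) * M := by
  have hinj : InjOn x (Finset.univ : Finset ι) := fun i _ j _ hij => by
    by_contra hne
    have := hsep i j hne
    rw [hij, sub_self, abs_zero] at this
    linarith
  rw [Lagrange.eq_interpolate hinj hQ, Lagrange.interpolate_apply, eval_finsetSum]
  calc |∑ i, ((C (Q.eval (x i)) * Lagrange.basis Finset.univ x i).eval t)|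
      ≤ ∑ i, |Q.eval (x i)| * |(Lagrange.basis Finset.univ x i).eval t| := by
        simpa only [eval_mul, eval_C, abs_mul] using Finset.abs_sum_le_sum_abs
          (fun i => Q.eval (x i) * (Lagrange.basis Finset.univ x i).eval t) Finset.univ
    _ ≤ ∑ _i : ι, M * (L / δ) ^ (Fintype.card ι - 1) :=
        Finset.sum_le_sum fun i _ => mul_le_mul (hM i) (abs_eval_lagrangeBasis_le hδ hsep ht i)
          (abs_nonneg _) ((abs_nonneg _).trans (hM i))
    _ = Fintype.card ι * (L / δ) ^ (Fintype.card ι - 1) * M := by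
        rw [Finset.sum_const, Finset.card_univ, nsmul_eq_mul]; ring

end LagrangeBound

noncomputable def cumulativeVolume (A : Set ℝ) (u : ℝ) : ℝ :=
  (volume (A ∩ Iic u)).toReal

section CumulativeVolume

variable {A : Set ℝ} {a b u v : ℝ}

theorem cumulativeVolume_eq_add (hA : MeasurableSet A) (hfin : volume A ≠ ⊤) (huv : u ≤ v) :
    cumulativeVolume A v = cumulativeVolume A u + (volume (A ∩ Ioc u v)).toReal := by
  have hsplit : A ∩ Iic v = (A ∩ Iic u) ∪ (A ∩ Ioc u v) := by
    rw [← inter_union_distrib_left, Iic_union_Ioc_eq_Iic huv]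
  have hdisj : Disjoint (A ∩ Iic u) (A ∩ Ioc u v) :=
    (Iic_disjoint_Ioc le_rfl).mono inter_subset_right inter_subset_right
  rw [cumulativeVolume, cumulativeVolume, hsplit, measure_union hdisj (hA.inter measurableSet_Ioc),
    ENNReal.toReal_add (measure_ne_top_of_subset inter_subset_left hfin)
      (measure_ne_top_of_subset inter_subset_left hfin)]

theorem monotone_cumulativeVolume (hA : MeasurableSet A) (hfin : volume A ≠ ⊤) :
    Monotone (cumulativeVolume A) := fun _ _ huv => by
  rw [cumulativeVolume_eq_add hA hfin huv]
  exact le_add_of_nonneg_right ENNReal.toReal_nonneg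

theorem lipschitzWith_one_cumulativeVolume (hA : MeasurableSet A) (hfin : volume A ≠ ⊤) :
    LipschitzWith 1 (cumulativeVolume A) := by
  refine LipschitzWith.of_le_add fun u v => ?_
  rcases le_total u v with huv | hvu
  · exact (monotone_cumulativeVolume hA hfin huv).trans (le_add_of_nonneg_right dist_nonneg)
  · have hIoc : (volume (A ∩ Ioc v u)).toReal ≤ u - v := by
      rw [← ENNReal.toReal_ofReal (sub_nonneg.2 hvu), ← Real.volume_Ioc]
      exact ENNReal.toReal_mono measure_Ioc_lt_top.ne (measure_mono inter_subset_right)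
    rw [cumulativeVolume_eq_add hA hfin hvu, Real.dist_eq, abs_of_nonneg (sub_nonneg.2 hvu)]
    linarith

theorem cumulativeVolume_eq_zero_of_subset_Icc (hAab : A ⊆ Icc a b) :
    cumulativeVolume A a = 0 := by
  have hnull : volume (A ∩ Iic a) = 0 :=
    measure_mono_null (fun y ⟨hyA, hya⟩ => mem_singleton_iff.2 (le_antisymm hya (hAab hyA).1))
      Real.volume_singleton
  rw [cumulativeVolume, hnull, ENNReal.toReal_zero]

theorem cumulativeVolume_eq_volume_of_subset_Icc (hAab : A ⊆ Icc a b) :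
    cumulativeVolume A b = (volume A).toReal := by
  rw [cumulativeVolume, inter_eq_left.2 fun y hy => mem_Iic.2 (hAab hy).2]

theorem exists_mem_cumulativeVolume_mem_Icc (hA : MeasurableSet A) (hAab : A ⊆ Icc a b)
    {α β : ℝ} (hα : 0 ≤ α) (hαβ : α < β) (hβ : β ≤ (volume A).toReal) :
    ∃ y ∈ A, cumulativeVolume A y ∈ Icc α β := by
  have hfin : volume A ≠ ⊤ := measure_ne_top_of_subset hAab measure_Icc_lt_top.ne
  have hcont := (lipschitzWith_one_cumulativeVolume hA hfin).continuous
  have hF0 := cumulativeVolume_eq_zero_of_subset_Icc hAab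
  obtain ⟨v, hv⟩ : β ∈ range (cumulativeVolume A) := intermediate_value_univ a b hcont
    ⟨hF0 ▸ hα.trans hαβ.le, (cumulativeVolume_eq_volume_of_subset_Icc hAab).symm ▸ hβ⟩
  obtain ⟨u, hu⟩ : α ∈ range (cumulativeVolume A) :=
    intermediate_value_univ a v hcont ⟨hF0 ▸ hα, hv ▸ hαβ.le⟩
  have huv : u ≤ v := by
    by_contra! hvu
    linarith [monotone_cumulativeVolume hA hfin hvu.le]
  have hpos : volume (A ∩ Ioc u v) ≠ 0 := fun h0 => by
    have := cumulativeVolume_eq_add hA hfin huv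
    rw [h0, ENNReal.toReal_zero, hu, hv] at this
    linarith
  obtain ⟨y, hyA, hyu, hyv⟩ := nonempty_of_measure_ne_zero hpos
  have hmono := monotone_cumulativeVolume hA hfin
  exact ⟨y, hyA, hu ▸ hmono hyu.le, hv ▸ hmono hyv⟩

end CumulativeVolume

theorem exists_separated_points_of_subset_Icc {A : Set ℝ} {a b δ : ℝ} (hA : MeasurableSet A)
    (hAab : A ⊆ Icc a b) (hδ : 0 < δ) (k : ℕ) (hvol : 2 * k * δ ≤ (volume A).toReal) :
    ∃ x : Fin k → ℝ, (∀ i, x i ∈ A) ∧ ∀ i j, i ≠ j → δ ≤ |x i - x j| := by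
  have hwindow (i : Fin k) :
      ∃ y ∈ A, cumulativeVolume A y ∈ Icc (2 * i * δ) ((2 * i + 1) * δ) := by
    have hik : (i : ℝ) + 1 ≤ k := by exact_mod_cast i.isLt
    exact exists_mem_cumulativeVolume_mem_Icc hA hAab (by positivity) (by linarith) (by nlinarith)
  choose x hxA hxF using hwindow
  refine ⟨x, hxA, fun i j hij => ?_⟩
  have hfin : volume A ≠ ⊤ := measure_ne_top_of_subset hAab measure_Icc_lt_top.ne
  have hlip := (lipschitzWith_one_cumulativeVolume hA hfin).dist_le_mul (x i) (x j)
  rw [NNReal.coe_one, one_mul, Real.dist_eq, Real.dist_eq] at hlip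
  have hgap : δ ≤ |cumulativeVolume A (x i) - cumulativeVolume A (x j)| := by
    rcases Fin.lt_or_lt_of_ne hij with h | h
    · have h' : (i : ℝ) + 1 ≤ j := by exact_mod_cast h
      rw [abs_sub_comm, le_abs]; left; nlinarith [(hxF i).2, (hxF j).1]
    · have h' : (j : ℝ) + 1 ≤ i := by exact_mod_cast h
      rw [le_abs]; left; nlinarith [(hxF j).2, (hxF i).1]
  exact hgap.trans hlip

theorem remez_sup_bound_general (k : ℕ) (ρ : ℝ) (hρ0 : 0 < ρ) :
    ∃ c : ℝ, 0 < c ∧ ∀ (a b : ℝ), a < b → ∀ A : Set ℝ, A ⊆ Set.Icc a b →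
      MeasurableSet A → ENNReal.ofReal (ρ * (b - a)) ≤ volume A →
      ∀ Q : Polynomial ℝ, Q.degree < k →
        ∀ t ∈ Set.Icc a b, |Q.eval t| ≤ c * sSup ((fun s => |Q.eval s|) '' A) := by
  refine ⟨k * ((2 * k + 1) / ρ) ^ (k - 1) + 1, by positivity, ?_⟩
  intro a b hab A hA hAm hAv Q hQ t ht
  set S := sSup ((fun s => |Q.eval s|) '' A)
  set δ := ρ * (b - a) / (2 * k + 1)
  have hδ : 0 < δ := by have := sub_pos.2 hab; positivity
  have hvol : 2 * k * δ ≤ (volume A).toReal := by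
    have hfin : volume A ≠ ⊤ := measure_ne_top_of_subset hA measure_Icc_lt_top.ne
    refine le_trans ?_ ((ENNReal.ofReal_le_iff_le_toReal hfin).1 hAv)
    rw [mul_div_assoc', div_le_iff₀ (by positivity)]
    nlinarith [sub_pos.2 hab]
  obtain ⟨x, hxA, hsep⟩ := exists_separated_points_of_subset_Icc hAm hA hδ k hvol
  have hbdd : BddAbove ((fun s => |Q.eval s|) '' A) :=
    (isCompact_Icc.bddAbove_image Q.continuous.abs.continuousOn).mono (image_mono hA)
  have hS : 0 ≤ S := Real.sSup_nonneg (by rintro _ ⟨s, -, rfl⟩; exact abs_nonneg _)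
  have hratio : (b - a) / δ = (2 * k + 1) / ρ := by
    rw [div_div_eq_mul_div, mul_comm ρ, mul_div_mul_left _ _ (sub_pos.2 hab).ne']
  have key := abs_eval_le_of_separated (x := x) (t := t) (L := b - a) (M := S)
    (by rwa [Fintype.card_fin]) hδ hsep (fun j => Real.dist_le_of_mem_Icc ht (hA (hxA j)))
    (fun i => le_csSup hbdd ⟨x i, hxA i, rfl⟩)
  rw [Fintype.card_fin, hratio] at key
  exact key.trans (mul_le_mul_of_nonneg_right (le_add_of_nonneg_right zero_le_one) hS)

/-- Remez-type inequality: a polynomial of degree `< k` on an interval `I` is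
controlled by its sup on a subset `A ⊆ I` of measure at least `ρ|I|`. -/
theorem remez_sup_bound (k : ℕ) (ρ : ℝ) (hρ0 : 0 < ρ) (hρ1 : ρ < 1) :
    ∃ c : ℝ, 0 < c ∧ ∀ (a b : ℝ), a < b → ∀ A : Set ℝ, A ⊆ Set.Icc a b →
      MeasurableSet A → ENNReal.ofReal (ρ * (b - a)) ≤ volume A →
      ∀ Q : Polynomial ℝ, Q.degree < k →
        ∀ t ∈ Set.Icc a b, |Q.eval t| ≤ c * sSup ((fun s => |Q.eval s|) '' A) :=
  remez_sup_bound_general k ρ hρ0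
end

section
/- Let 0 < ρ < 1, let I be a bounded interval and A ⊆ I a measurable subset with |A| ≥ ρ|I|. Then for every polynomial Q of degree at most k-1, ∫_I |Q(t)| dt ≤ c · ∫_A |Q(t)| dt, where c depends only on k and ρ. -/
/-!
After the affine change of variables `t = a + (b - a) s` it suffices to find `c` for `I = [0, 1]`,
uniformly over the measurable `A ⊆ [0, 1]` with `|A| ≥ ρ`. Write the polynomials of degree `< k`
as `P_v = ∑ vᵢ Xⁱ` and put `F v = inf_A ∫_A |P_v|`. Then `F` is `k`-Lipschitz and homogeneous,
and `F v > 0` for `v ≠ 0`: `P_v` has finitely many roots, so `|P_v| < ε` only on a set of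
measure `< ρ` for some `ε > 0`, and every admissible `A` keeps a set of positive measure where
`|P_v| ≥ ε`. By compactness of the unit sphere, `F v ≥ m ‖v‖` with `m > 0`, while
`∫₀¹ |P_v| ≤ k ‖v‖`.
-/
open MeasureTheory Set Filter Topology
open scoped ENNReal

theorem exists_pos_mul_norm_le_of_continuous_of_homogeneous {E : Type*}
    [NormedAddCommGroup E] [NormedSpace ℝ E] [FiniteDimensional ℝ E] {F : E → ℝ}
    (hF : Continuous F) (hsmul : ∀ (c : ℝ) (v : E), F (c • v) = |c| * F v)
    (hpos : ∀ v ≠ 0, 0 < F v) : ∃ m > 0, ∀ v, m * ‖v‖ ≤ F v := by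
  have hF0 : F 0 = 0 := by simpa using hsmul 0 0
  cases subsingleton_or_nontrivial E with
  | inl _ => exact ⟨1, one_pos, fun v => by simp [Subsingleton.elim v 0, hF0]⟩
  | inr _ =>
    obtain ⟨u, hu, hmin⟩ := (isCompact_sphere (0 : E) 1).exists_isMinOn
      (NormedSpace.sphere_nonempty.2 zero_le_one) hF.continuousOn
    refine ⟨F u, hpos u (ne_zero_of_mem_unit_sphere ⟨u, hu⟩), fun v => ?_⟩
    rcases eq_or_ne v 0 with rfl | hv
    · simp [hF0]
    have hv' : 0 < ‖v‖ := norm_pos_iff.2 hv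
    have hunit : ‖v‖⁻¹ • v ∈ Metric.sphere (0 : E) 1 := by simp [norm_smul, hv'.ne']
    calc F u * ‖v‖ ≤ F (‖v‖⁻¹ • v) * ‖v‖ := by gcongr; exact hmin hunit
      _ = F v := by rw [hsmul, abs_of_pos (inv_pos.2 hv')]; field_simp

noncomputable section LargeSubsets

variable {α : Type*} [MeasurableSpace α] (μ : Measure α) (s : Set α) (δ : ℝ≥0∞)

def largeSubsets : Set (Set α) := {A | MeasurableSet A ∧ A ⊆ s ∧ δ ≤ μ A}

/-- When no large subset exists, the infimum is the junk value `0`; hence the hypothesis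
`δ ≤ μ s` in the lower bounds below. -/
def infLargeSetIntegral (f : α → ℝ) : ℝ := ⨅ A : largeSubsets μ s δ, ∫ x in A, |f x| ∂μ

variable {μ s δ}

theorem infLargeSetIntegral_le (f : α → ℝ) {A : Set α} (hA : A ∈ largeSubsets μ s δ) :
    infLargeSetIntegral μ s δ f ≤ ∫ x in A, |f x| ∂μ :=
  ciInf_le (f := fun A : largeSubsets μ s δ => ∫ x in A, |f x| ∂μ)
    ⟨0, forall_mem_range.2 fun _ => integral_nonneg fun _ => abs_nonneg _⟩ ⟨A, hA⟩

theorem le_infLargeSetIntegral (hs : MeasurableSet s) (hδ : δ ≤ μ s) {f : α → ℝ} {c : ℝ}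
    (h : ∀ A ∈ largeSubsets μ s δ, c ≤ ∫ x in A, |f x| ∂μ) : c ≤ infLargeSetIntegral μ s δ f :=
  have : Nonempty (largeSubsets μ s δ) := ⟨⟨s, hs, subset_rfl, hδ⟩⟩
  le_ciInf fun A => h A A.2

theorem infLargeSetIntegral_const_mul (c : ℝ) (f : α → ℝ) :
    infLargeSetIntegral μ s δ (fun x => c * f x) = |c| * infLargeSetIntegral μ s δ f := by
  simp only [infLargeSetIntegral, Real.mul_iInf_of_nonneg (abs_nonneg c), ← integral_const_mul,
    abs_mul]

theorem infLargeSetIntegral_le_add (hs : MeasurableSet s) (hδ : δ ≤ μ s) {f g : α → ℝ}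
    (hf : IntegrableOn f s μ) (hg : IntegrableOn g s μ) :
    infLargeSetIntegral μ s δ f ≤ infLargeSetIntegral μ s δ g + ∫ x in s, |f x - g x| ∂μ := by
  rw [← sub_le_iff_le_add]
  refine le_infLargeSetIntegral hs hδ fun A hA => ?_
  have hfA := hf.mono_set hA.2.1
  have hgA := hg.mono_set hA.2.1
  calc infLargeSetIntegral μ s δ f - ∫ x in s, |f x - g x| ∂μ
      ≤ (∫ x in A, |f x| ∂μ) - ∫ x in A, |f x - g x| ∂μ :=
        sub_le_sub (infLargeSetIntegral_le f hA) (setIntegral_mono_set (hf.sub hg).abs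
          (.of_forall fun _ => abs_nonneg _) hA.2.1.eventuallyLE)
    _ = ∫ x in A, (|f x| - |f x - g x|) ∂μ := (integral_sub hfA.abs (hfA.sub hgA).abs).symm
    _ ≤ ∫ x in A, |g x| ∂μ :=
        setIntegral_mono_on (hfA.abs.sub (hfA.sub hgA).abs) hgA.abs hA.1 fun x _ => by
          linarith [abs_sub_abs_le_abs_sub (f x) (g x)]

theorem exists_pos_measure_inter_abs_lt_lt {f : α → ℝ} (hf : Measurable f)
    (hs : MeasurableSet s) (hμs : μ s ≠ ∞) (h0 : μ (s ∩ f ⁻¹' {0}) < δ) :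
    ∃ ε > 0, μ (s ∩ {x | |f x| < ε}) < δ := by
  have hlim : Tendsto (fun ε => μ (s ∩ {x | |f x| < ε})) (𝓝[>] 0)
      (𝓝 (μ (⋂ ε > (0 : ℝ), s ∩ {x | |f x| < ε}))) :=
    tendsto_measure_biInter_gt
      (fun ε _ => (hs.inter (measurableSet_lt hf.abs measurable_const)).nullMeasurableSet)
      (fun i j _ hij => inter_subset_inter_right _ fun x (hx : |f x| < i) => hx.trans_le hij)
      ⟨1, one_pos, measure_ne_top_of_subset inter_subset_left hμs⟩
  have hinter : ⋂ ε > (0 : ℝ), s ∩ {x | |f x| < ε} = s ∩ f ⁻¹' {0} := by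
    ext x
    simp only [mem_iInter, mem_inter_iff, mem_ofPred_eq, mem_preimage, mem_singleton_iff]
    refine ⟨fun h => ⟨(h 1 one_pos).1, abs_eq_zero.1 ?_⟩, fun ⟨hx, h⟩ ε hε => ⟨hx, by simpa [h]⟩⟩
    exact le_antisymm (le_of_forall_pos_lt_add fun ε hε => by simpa using (h ε hε).2)
      (abs_nonneg _)
  rw [hinter] at hlim
  obtain ⟨ε, hε, hεpos⟩ := ((hlim.eventually (gt_mem_nhds h0)).and self_mem_nhdsWithin).exists
  exact ⟨ε, hεpos, hε⟩

theorem mul_measureReal_diff_le_setIntegral_abs {f : α → ℝ} {A : Set α} (hA : MeasurableSet A)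
    (hf : IntegrableOn f A μ) (ε : ℝ) :
    ε * μ.real (A \ {x | |f x| < ε}) ≤ ∫ x in A, |f x| ∂μ := by
  have h := mul_meas_ge_le_integral_of_nonneg (μ := μ.restrict A)
    (.of_forall fun x => abs_nonneg (f x)) hf.abs ε
  have hset : A \ {x | |f x| < ε} = {x | ε ≤ |f x|} ∩ A := by ext; simp [and_comm]
  rwa [measureReal_def, Measure.restrict_apply' hA, ← hset, ← measureReal_def] at h

theorem infLargeSetIntegral_pos {f : α → ℝ} (hf : Measurable f) (hfs : IntegrableOn f s μ)
    (hs : MeasurableSet s) (hμs : μ s ≠ ∞) (hδ : δ ≤ μ s) (h0 : μ (s ∩ f ⁻¹' {0}) < δ) :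
    0 < infLargeSetIntegral μ s δ f := by
  obtain ⟨ε, hε, hsmall⟩ := exists_pos_measure_inter_abs_lt_lt hf hs hμs h0
  set N := s ∩ {x | |f x| < ε}
  have hgap : 0 < (δ - μ N).toReal :=
    ENNReal.toReal_pos (tsub_pos_of_lt hsmall).ne' (ne_top_of_le_ne_top hμs (tsub_le_self.trans hδ))
  refine lt_of_lt_of_le (mul_pos hε hgap) (le_infLargeSetIntegral hs hδ fun A hA => ?_)
  have hdiff : δ - μ N ≤ μ (A \ {x | |f x| < ε}) := calc
    δ - μ N ≤ μ A - μ N := by gcongr; exact hA.2.2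
    _ ≤ μ (A \ N) := le_measure_sdiff
    _ ≤ μ (A \ {x | |f x| < ε}) :=
        measure_mono fun x ⟨hxA, hxN⟩ => ⟨hxA, fun h => hxN ⟨hA.2.1 hxA, h⟩⟩
  calc ε * (δ - μ N).toReal ≤ ε * μ.real (A \ {x | |f x| < ε}) := by
        gcongr
        exact ENNReal.toReal_mono (measure_ne_top_of_subset (sdiff_subset.trans hA.2.1) hμs) hdiff
    _ ≤ ∫ x in A, |f x| ∂μ := mul_measureReal_diff_le_setIntegral_abs hA.1 (hfs.mono_set hA.2.1) ε

end LargeSubsets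

open Polynomial

section PolyOfCoeffs

variable {R : Type*} [Semiring R] {k : ℕ}

noncomputable def polyOfCoeffs (v : Fin k → R) : R[X] := (degreeLTEquiv R k).symm v

theorem eval_polyOfCoeffs (v : Fin k → R) (t : R) :
    (polyOfCoeffs v).eval t = ∑ i, v i * t ^ (i : ℕ) := by
  simp [polyOfCoeffs, eval_eq_sum_degreeLTEquiv ((degreeLTEquiv R k).symm v).2]

theorem polyOfCoeffs_degreeLTEquiv {Q : R[X]} (hQ : Q ∈ degreeLT R k) :
    polyOfCoeffs (degreeLTEquiv R k ⟨Q, hQ⟩) = Q := by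
  simp [polyOfCoeffs]

theorem polyOfCoeffs_ne_zero {v : Fin k → R} (hv : v ≠ 0) : polyOfCoeffs v ≠ 0 := by
  simpa [polyOfCoeffs] using hv

theorem polyOfCoeffs_smul (c : R) (v : Fin k → R) :
    polyOfCoeffs (c • v) = c • polyOfCoeffs v := by
  simp [polyOfCoeffs]

end PolyOfCoeffs

theorem polyOfCoeffs_sub {R : Type*} [Ring R] {k : ℕ} (v w : Fin k → R) :
    polyOfCoeffs (v - w) = polyOfCoeffs v - polyOfCoeffs w := by
  simp [polyOfCoeffs]

theorem abs_eval_polyOfCoeffs_le {k : ℕ} (v : Fin k → ℝ) {t : ℝ} (ht : |t| ≤ 1) :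
    |(polyOfCoeffs v).eval t| ≤ k * ‖v‖ := by
  rw [eval_polyOfCoeffs]
  calc |∑ i, v i * t ^ (i : ℕ)| ≤ ∑ i, |v i * t ^ (i : ℕ)| := Finset.abs_sum_le_sum_abs _ _
    _ ≤ ∑ _i : Fin k, ‖v‖ := Finset.sum_le_sum fun i _ => by
        rw [abs_mul, abs_pow]
        exact (mul_le_of_le_one_right (abs_nonneg _) (pow_le_one₀ (abs_nonneg t) ht)).trans
          (norm_le_pi_norm v i)
    _ = k * ‖v‖ := by simp

theorem setIntegral_Icc_abs_eval_polyOfCoeffs_le {k : ℕ} (v : Fin k → ℝ) :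
    ∫ t in Icc (0 : ℝ) 1, |(polyOfCoeffs v).eval t| ≤ k * ‖v‖ := by
  have h := norm_setIntegral_le_of_norm_le_const (μ := volume) (s := Icc (0 : ℝ) 1)
    (f := fun t => |(polyOfCoeffs v).eval t|) (by simp) fun t ht => by
      rw [Real.norm_eq_abs, abs_abs]
      exact abs_eval_polyOfCoeffs_le v (abs_le.2 ⟨by linarith [ht.1], ht.2⟩)
  simpa using (le_abs_self _).trans h

section UnitInterval

variable {k : ℕ} {ρ : ℝ}

theorem lipschitzWith_infLargeSetIntegral_eval_polyOfCoeffs (hρ1 : ρ ≤ 1) :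
    LipschitzWith k fun v : Fin k → ℝ =>
      infLargeSetIntegral volume (Icc 0 1) (.ofReal ρ) fun t => (polyOfCoeffs v).eval t := by
  refine LipschitzWith.of_le_add_mul k fun v w => ?_
  have hint : ∀ u : Fin k → ℝ, IntegrableOn (fun t => (polyOfCoeffs u).eval t) (Icc 0 1) :=
    fun u => (polyOfCoeffs u).continuous.integrableOn_Icc
  calc _ ≤ _ + ∫ t in Icc 0 1, |(polyOfCoeffs v).eval t - (polyOfCoeffs w).eval t| :=
        infLargeSetIntegral_le_add measurableSet_Icc (by simpa using hρ1) (hint v) (hint w)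
    _ ≤ _ + k * dist v w := by
        rw [dist_eq_norm]
        gcongr
        simpa [polyOfCoeffs_sub] using setIntegral_Icc_abs_eval_polyOfCoeffs_le (v - w)

theorem infLargeSetIntegral_eval_polyOfCoeffs_smul (c : ℝ) (v : Fin k → ℝ) :
    infLargeSetIntegral volume (Icc 0 1) (.ofReal ρ) (fun t => (polyOfCoeffs (c • v)).eval t) =
      |c| * infLargeSetIntegral volume (Icc 0 1) (.ofReal ρ) fun t => (polyOfCoeffs v).eval t := by
  simp [polyOfCoeffs_smul, infLargeSetIntegral_const_mul]

theorem infLargeSetIntegral_eval_polyOfCoeffs_pos (hρ0 : 0 < ρ) (hρ1 : ρ ≤ 1)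
    {v : Fin k → ℝ} (hv : v ≠ 0) :
    0 < infLargeSetIntegral volume (Icc 0 1) (.ofReal ρ) fun t => (polyOfCoeffs v).eval t := by
  have hroots : volume (Icc (0 : ℝ) 1 ∩ (fun t => (polyOfCoeffs v).eval t) ⁻¹' {0}) = 0 :=
    measure_mono_null inter_subset_right
      ((finite_setOfPred_isRoot (polyOfCoeffs_ne_zero hv)).measure_zero volume)
  exact infLargeSetIntegral_pos (polyOfCoeffs v).continuous.measurable
    (polyOfCoeffs v).continuous.integrableOn_Icc measurableSet_Icc (by simp)
    (by simpa using hρ1) (by simpa [hroots] using hρ0)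

theorem exists_setIntegral_Icc_abs_eval_le_mul (k : ℕ) (hρ0 : 0 < ρ) (hρ1 : ρ ≤ 1) :
    ∃ c > 0, ∀ A ∈ largeSubsets volume (Icc 0 1) (.ofReal ρ), ∀ Q : ℝ[X], Q.degree < k →
      ∫ t in Icc 0 1, |Q.eval t| ≤ c * ∫ t in A, |Q.eval t| := by
  obtain ⟨m, hm, hmF⟩ := exists_pos_mul_norm_le_of_continuous_of_homogeneous
    (lipschitzWith_infLargeSetIntegral_eval_polyOfCoeffs (k := k) hρ1).continuous
    infLargeSetIntegral_eval_polyOfCoeffs_smul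
    fun v hv => infLargeSetIntegral_eval_polyOfCoeffs_pos hρ0 hρ1 hv
  refine ⟨(k + 1) / m, by positivity, fun A hA Q hQ => ?_⟩
  set v := degreeLTEquiv ℝ k ⟨Q, mem_degreeLT.2 hQ⟩
  rw [← polyOfCoeffs_degreeLTEquiv (mem_degreeLT.2 hQ)]
  calc ∫ t in Icc 0 1, |(polyOfCoeffs v).eval t| ≤ k * ‖v‖ :=
        setIntegral_Icc_abs_eval_polyOfCoeffs_le v
    _ ≤ (k + 1) * ‖v‖ := by gcongr; linarith
    _ = (k + 1) / m * (m * ‖v‖) := by field_simp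
    _ ≤ (k + 1) / m * ∫ t in A, |(polyOfCoeffs v).eval t| := by
        gcongr
        exact (hmF v).trans (infLargeSetIntegral_le _ hA)

end UnitInterval

theorem setIntegral_preimage_mul_add {E : Type*} [NormedAddCommGroup E] [NormedSpace ℝ E]
    (f : ℝ → E) (L a : ℝ) {B : Set ℝ} (hB : MeasurableSet B) :
    ∫ s in (fun s => L * s + a) ⁻¹' B, f (L * s + a) = |L⁻¹| • ∫ t in B, f t := by
  rw [← integral_indicator (hB.preimage (by fun_prop)), ← integral_indicator hB]
  change ∫ x, ((fun s => L * s + a) ⁻¹' B).indicator (f ∘ fun s => L * s + a) x = _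
  simp_rw [indicator_comp_right]
  rw [Measure.integral_comp_mul_left (fun x => B.indicator f (x + a)), integral_add_right_eq_self]

theorem volume_preimage_mul_add {L : ℝ} (hL : L ≠ 0) (a : ℝ) (A : Set ℝ) :
    volume ((fun s => L * s + a) ⁻¹' A) = .ofReal |L⁻¹| * volume A := by
  rw [show (fun s => L * s + a) ⁻¹' A = (L * ·) ⁻¹' ((· + a) ⁻¹' A) from rfl,
    Real.volume_preimage_mul_left hL, measure_preimage_add_right]

theorem setIntegral_abs_eval_eq_mul_setIntegral_comp (Q : ℝ[X]) {L : ℝ} (hL : 0 < L) (a : ℝ)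
    {B : Set ℝ} (hB : MeasurableSet B) :
    ∫ t in B, |Q.eval t| =
      L * ∫ s in (fun s => L * s + a) ⁻¹' B, |(Q.comp (C L * X + C a)).eval s| := by
  simp only [eval_comp, eval_add, eval_mul, eval_C, eval_X]
  rw [setIntegral_preimage_mul_add (fun t => |Q.eval t|) L a hB, abs_of_pos (inv_pos.2 hL),
    smul_eq_mul, mul_inv_cancel_left₀ hL.ne']

theorem preimage_mul_sub_add_Icc {a b : ℝ} (hab : a < b) :
    (fun s => (b - a) * s + a) ⁻¹' Icc a b = Icc 0 1 := by
  ext s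
  simp only [mem_preimage, mem_Icc, le_add_iff_nonneg_left,
    mul_nonneg_iff_of_pos_left (sub_pos.2 hab), ← le_sub_iff_add_le,
    mul_le_iff_le_one_right (sub_pos.2 hab)]

theorem preimage_mul_sub_add_mem_largeSubsets {ρ a b : ℝ} (hab : a < b) {A : Set ℝ}
    (hA : MeasurableSet A) (hAab : A ⊆ Icc a b) (hvol : .ofReal (ρ * (b - a)) ≤ volume A) :
    (fun s => (b - a) * s + a) ⁻¹' A ∈ largeSubsets volume (Icc 0 1) (.ofReal ρ) := by
  have hL : 0 < b - a := sub_pos.2 hab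
  refine ⟨hA.preimage (by fun_prop), preimage_mul_sub_add_Icc hab ▸ preimage_mono hAab, ?_⟩
  rw [volume_preimage_mul_add hL.ne', abs_of_pos (inv_pos.2 hL)]
  calc ENNReal.ofReal ρ = .ofReal (b - a)⁻¹ * .ofReal (ρ * (b - a)) := by
        rw [← ENNReal.ofReal_mul (by positivity), mul_left_comm, inv_mul_cancel₀ hL.ne', mul_one]
    _ ≤ .ofReal (b - a)⁻¹ * volume A := by gcongr

/-- Remez-type inequality, integral version. -/
theorem remez_integral_bound (k : ℕ) (ρ : ℝ) (hρ0 : 0 < ρ) (hρ1 : ρ < 1) :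
    ∃ c : ℝ, 0 < c ∧ ∀ (a b : ℝ), a < b → ∀ A : Set ℝ, A ⊆ Set.Icc a b →
      MeasurableSet A → ENNReal.ofReal (ρ * (b - a)) ≤ volume A →
      ∀ Q : Polynomial ℝ,
        Q.degree < k →
        ∫ t in Set.Icc a b, |Q.eval t| ≤ c * ∫ t in A, |Q.eval t| := by
  obtain ⟨c, hc, hunit⟩ := exists_setIntegral_Icc_abs_eval_le_mul k hρ0 hρ1.le
  refine ⟨c, hc, fun a b hab A hAab hA hvol Q hQ => ?_⟩
  have hL : 0 < b - a := sub_pos.2 hab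
  set Q' := Q.comp (C (b - a) * X + C a)
  have hQ' : Q'.degree < k := by
    rwa [degree_comp (by rw [degree_linear hL.ne']; exact zero_lt_one), degree_linear hL.ne',
      mul_one]
  calc ∫ t in Icc a b, |Q.eval t| = (b - a) * ∫ s in Icc 0 1, |Q'.eval s| := by
        rw [setIntegral_abs_eval_eq_mul_setIntegral_comp Q hL a measurableSet_Icc,
          preimage_mul_sub_add_Icc hab]
    _ ≤ (b - a) * (c * ∫ s in (fun s => (b - a) * s + a) ⁻¹' A, |Q'.eval s|) := by
        gcongr
        exact hunit _ (preimage_mul_sub_add_mem_largeSubsets hab hA hAab hvol) Q' hQ'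
    _ = c * ∫ t in A, |Q.eval t| := by
        rw [setIntegral_abs_eval_eq_mul_setIntegral_comp Q hL a hA]
        ring
end

section
/- Let V be a bounded open interval and f an integrable function on V satisfying ∫_V |f(t)| dt ≤ λ·|V| for some λ > 0. Let T_V f denote the orthogonal projection (in L²(V)) of f onto the space of polynomials of degree at most k-1 on V. Then ‖T_V f‖²_{L²(V)} ≤ C·λ²·|V|, where C depends only on k. -/
/-!
Testing the orthogonality relations against `P` itself gives
`‖P‖²_{L²(V)} = ∫_V P f ≤ ‖P‖_{L^∞(V)} λ |V|`. On the finite-dimensional space of polynomials of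
degree `< k` the `L^∞` and `L²` norms on `[0, 1]` are equivalent (compactness of the unit sphere of
coefficient vectors), and rescaling `V` to `[0, 1]` turns this into the inverse estimate
`‖P‖²_{L^∞(V)} |V| ≤ K ‖P‖²_{L²(V)}`. Combining the two gives `‖P‖²_{L²(V)} ≤ K λ² |V|`.
-/

open MeasureTheory Set Polynomial

theorem exists_pos_mul_norm_sq_le_of_sq_homogeneous {E : Type*} [NormedAddCommGroup E]
    [NormedSpace ℝ E] [ProperSpace E] {g : E → ℝ} (hg : Continuous g) (hpos : ∀ x ≠ 0, 0 < g x)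
    (hsmul : ∀ (r : ℝ) (x : E), g (r • x) = r ^ 2 * g x) :
    ∃ μ > 0, ∀ x, μ * ‖x‖ ^ 2 ≤ g x := by
  have hg0 : g 0 = 0 := by simpa using hsmul 0 0
  rcases subsingleton_or_nontrivial E with hE | hE
  · exact ⟨1, one_pos, fun x => by simp [Subsingleton.elim x 0, hg0]⟩
  obtain ⟨x₀, hx₀, hmin⟩ := (isCompact_sphere (0 : E) 1).exists_isMinOn
    (NormedSpace.sphere_nonempty.2 zero_le_one) hg.continuousOn
  refine ⟨g x₀, hpos x₀ (ne_zero_of_mem_unit_sphere ⟨x₀, hx₀⟩), fun x => ?_⟩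
  rcases eq_or_ne x 0 with rfl | hx
  · simp [hg0]
  have hu : ‖x‖⁻¹ • x ∈ Metric.sphere (0 : E) 1 := by
    simp [norm_smul, norm_ne_zero_iff.2 hx]
  calc g x₀ * ‖x‖ ^ 2 ≤ g (‖x‖⁻¹ • x) * ‖x‖ ^ 2 := by gcongr; exact hmin hu
    _ = g x := by
      rw [hsmul, ← mul_rotate, ← mul_pow, mul_inv_cancel₀ (norm_ne_zero_iff.2 hx), one_pow,
        one_mul]

theorem integral_sq_eval_pos {P : ℝ[X]} (hP : P ≠ 0) {a b : ℝ} (hab : a < b) :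
    0 < ∫ x in a..b, P.eval x ^ 2 := by
  obtain ⟨x, hx, hPx⟩ : ∃ x ∈ Ioo a b, P.eval x ≠ 0 := by
    by_contra! h
    exact hP (P.eq_zero_of_infinite_isRoot ((Ioo_infinite hab).mono h))
  have hcont : Continuous fun x => P.eval x ^ 2 := P.continuous.pow 2
  rw [intervalIntegral.integral_pos_iff_support_of_nonneg_ae
    (ae_of_all _ fun _ => sq_nonneg _) (hcont.intervalIntegrable _ _)]
  refine ⟨hab, ((hcont.isOpen_support.inter isOpen_Ioo).measure_pos volume
    ⟨x, by simpa using hPx, hx⟩).trans_le (measure_mono ?_)⟩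
  exact inter_subset_inter_right _ Ioo_subset_Ioc_self

theorem eval_degreeLTEquiv_symm {k : ℕ} (c : Fin k → ℝ) (x : ℝ) :
    ((degreeLTEquiv ℝ k).symm c : ℝ[X]).eval x = ∑ i, c i * x ^ (i : ℕ) := by
  rw [eval_eq_sum_degreeLTEquiv (Submodule.coe_mem _)]
  simp

theorem exists_sq_eval_le_mul_integral_sq_unitInterval (k : ℕ) :
    ∃ K > 0, ∀ P ∈ degreeLT ℝ k, ∀ x ∈ Icc (0 : ℝ) 1,
      P.eval x ^ 2 ≤ K * ∫ t in (0 : ℝ)..1, P.eval t ^ 2 := by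
  set g : (Fin k → ℝ) → ℝ := fun c => ∫ t in (0 : ℝ)..1, (∑ i, c i * t ^ (i : ℕ)) ^ 2
  have hg : Continuous g :=
    intervalIntegral.continuous_parametric_intervalIntegral_of_continuous' (by fun_prop) 0 1
  have hpos : ∀ c ≠ 0, 0 < g c := fun c hc => by
    simpa only [g, eval_degreeLTEquiv_symm] using
      integral_sq_eval_pos (P := (degreeLTEquiv ℝ k).symm c) (by simpa using hc) zero_lt_one
  have hsmul : ∀ (r : ℝ) c, g (r • c) = r ^ 2 * g c := fun r c => by
    simp only [g, Pi.smul_apply, smul_eq_mul, mul_assoc, ← Finset.mul_sum, mul_pow,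
      intervalIntegral.integral_const_mul]
  obtain ⟨μ, hμ, hcoer⟩ := exists_pos_mul_norm_sq_le_of_sq_homogeneous hg hpos hsmul
  -- `k ^ 2 + 1` rather than `k ^ 2` keeps the constant positive when `k = 0`.
  refine ⟨(k ^ 2 + 1) / μ, by positivity, fun P hP x hx => ?_⟩
  set c := degreeLTEquiv ℝ k ⟨P, hP⟩
  have hgc : g c = ∫ t in (0 : ℝ)..1, P.eval t ^ 2 := by
    simp only [g, c, eval_eq_sum_degreeLTEquiv hP]
  have habs : |P.eval x| ≤ k * ‖c‖ := by
    rw [eval_eq_sum_degreeLTEquiv hP]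
    calc |∑ i, c i * x ^ (i : ℕ)| ≤ ∑ i, |c i * x ^ (i : ℕ)| := Finset.abs_sum_le_sum_abs _ _
      _ ≤ ∑ _i : Fin k, ‖c‖ := Finset.sum_le_sum fun i _ => by
        rw [abs_mul, abs_pow, abs_of_nonneg hx.1, ← Real.norm_eq_abs]
        exact (mul_le_of_le_one_right (norm_nonneg _) (pow_le_one₀ hx.1 hx.2)).trans
          (norm_le_pi_norm c i)
      _ = k * ‖c‖ := by simp
  calc P.eval x ^ 2 ≤ (k * ‖c‖) ^ 2 := by rw [← sq_abs]; gcongr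
    _ ≤ (k ^ 2 + 1) * ‖c‖ ^ 2 := by rw [mul_pow]; gcongr; linarith
    _ ≤ (k ^ 2 + 1) / μ * g c := by
      rw [div_mul_eq_mul_div, le_div_iff₀ hμ, mul_assoc, mul_comm _ μ]
      gcongr
      exact hcoer c
    _ = _ := by rw [hgc]

theorem exists_sq_eval_mul_le_mul_integral_sq (k : ℕ) :
    ∃ K > 0, ∀ a b : ℝ, a < b → ∀ P ∈ degreeLT ℝ k, ∀ t ∈ Icc a b,
      P.eval t ^ 2 * (b - a) ≤ K * ∫ x in a..b, P.eval x ^ 2 := by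
  obtain ⟨K, hK, hbound⟩ := exists_sq_eval_le_mul_integral_sq_unitInterval k
  refine ⟨K, hK, fun a b hab P hP t ht => ?_⟩
  have hL : 0 < b - a := sub_pos.2 hab
  set Q := P.comp (C (b - a) * X + C a)
  have hQ : Q ∈ degreeLT ℝ k := by
    rwa [mem_degreeLT, degree_comp (by rw [degree_linear hL.ne']; exact zero_lt_one),
      degree_linear hL.ne', mul_one, ← mem_degreeLT]
  have hQeval : ∀ x, Q.eval x = P.eval ((b - a) * x + a) := fun x => by simp [Q]
  have hQint : ∫ x in (0 : ℝ)..1, Q.eval x ^ 2 = (b - a)⁻¹ * ∫ x in a..b, P.eval x ^ 2 := by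
    simp only [hQeval]
    rw [intervalIntegral.integral_comp_mul_add (fun y => P.eval y ^ 2) hL.ne', smul_eq_mul]
    congr 3 <;> ring
  have hx : (t - a) / (b - a) ∈ Icc (0 : ℝ) 1 := by
    constructor
    · exact div_nonneg (by linarith [ht.1]) hL.le
    · rw [div_le_one hL]; linarith [ht.2]
  have hQbound := hbound Q hQ _ hx
  rw [hQeval, hQint, mul_div_cancel₀ _ hL.ne', sub_add_cancel] at hQbound
  calc P.eval t ^ 2 * (b - a) ≤ K * ((b - a)⁻¹ * ∫ x in a..b, P.eval x ^ 2) * (b - a) := by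
        gcongr
    _ = K * ∫ x in a..b, P.eval x ^ 2 := by field_simp

theorem setIntegral_mul_le_mul_integral_abs {α : Type*} [MeasurableSpace α] {μ : Measure α}
    {s : Set α} (hs : MeasurableSet s) {f g : α → ℝ} (hf : IntegrableOn f s μ)
    (hgf : IntegrableOn (fun x => g x * f x) s μ) {M : ℝ} (hgM : ∀ x ∈ s, |g x| ≤ M) :
    ∫ x in s, g x * f x ∂μ ≤ M * ∫ x in s, |f x| ∂μ := by
  rw [← integral_const_mul]
  refine setIntegral_mono_on hgf (hf.abs.const_mul M) hs fun x hx => ?_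
  calc g x * f x ≤ |g x| * |f x| := by rw [← abs_mul]; exact le_abs_self _
    _ ≤ M * |f x| := by gcongr; exact hgM x hx

theorem setIntegral_sq_eq_setIntegral_mul_of_orthogonal {α : Type*} [MeasurableSpace α]
    {μ : Measure α} {s : Set α} {f p : α → ℝ} (hp : IntegrableOn (fun x => p x ^ 2) s μ)
    (hpf : IntegrableOn (fun x => p x * f x) s μ) (horth : ∫ x in s, (f x - p x) * p x ∂μ = 0) :
    ∫ x in s, p x ^ 2 ∂μ = ∫ x in s, p x * f x ∂μ := by
  rw [eq_comm, ← sub_eq_zero, ← integral_sub hpf hp, ← horth]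
  congr 1 with x
  ring

/-- If `∫_V |f| ≤ λ|V|`, then the L²(V)-orthogonal projection `P` of `f` onto
polynomials of degree `< k` satisfies `‖P‖²_{L²(V)} ≤ C λ² |V|`.
The projection is characterized by the orthogonality relations
`∫_V (f - P) Q = 0` for all polynomials `Q` of degree `< k`. -/
theorem polynomial_projection_L2_bound (k : ℕ) :
    ∃ C : ℝ, 0 < C ∧ ∀ (a b : ℝ), a < b → ∀ (f : ℝ → ℝ) (lam : ℝ), 0 < lam →
      IntegrableOn f (Set.Ioo a b) →
      (∫ t in Set.Ioo a b, |f t|) ≤ lam * (b - a) →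
      ∀ P : Polynomial ℝ, P.degree < k →
        (∀ Q : Polynomial ℝ, Q.degree < k →
          ∫ t in Set.Ioo a b, (f t - P.eval t) * Q.eval t = 0) →
        (∫ t in Set.Ioo a b, (P.eval t) ^ 2) ≤ C * lam ^ 2 * (b - a) := by
  obtain ⟨K, hK, hbound⟩ := exists_sq_eval_mul_le_mul_integral_sq k
  refine ⟨K, hK, fun a b hab f lam _ hf hfL P hP horth => ?_⟩
  have hL : 0 < b - a := sub_pos.2 hab
  set I := ∫ t in Ioo a b, P.eval t ^ 2 with hI
  have hI0 : 0 ≤ I := setIntegral_nonneg measurableSet_Ioo fun _ _ => sq_nonneg _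
  set M := √(K * I / (b - a))
  have hPM : ∀ t ∈ Ioo a b, |P.eval t| ≤ M := fun t ht => Real.abs_le_sqrt <| by
    rw [le_div_iff₀ hL, hI, ← integral_Ioc_eq_integral_Ioo,
      ← intervalIntegral.integral_of_le hab.le]
    exact hbound a b hab P (mem_degreeLT.2 hP) t (Ioo_subset_Icc_self ht)
  have hPf : IntegrableOn (fun t => P.eval t * f t) (Ioo a b) :=
    hf.bdd_mul P.continuous.aestronglyMeasurable (ae_restrict_of_forall_mem measurableSet_Ioo hPM)
  have hIM : I ≤ M * (lam * (b - a)) := calc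
    I = ∫ t in Ioo a b, P.eval t * f t :=
      setIntegral_sq_eq_setIntegral_mul_of_orthogonal
        ((P.continuous.pow 2).integrableOn_Icc.mono_set Ioo_subset_Icc_self) hPf (horth P hP)
    _ ≤ M * ∫ t in Ioo a b, |f t| :=
      setIntegral_mul_le_mul_integral_abs measurableSet_Ioo hf hPf hPM
    _ ≤ M * (lam * (b - a)) := by gcongr
  have hsq : I ^ 2 ≤ I * (K * lam ^ 2 * (b - a)) := calc
    I ^ 2 ≤ (M * (lam * (b - a))) ^ 2 := by gcongr
    _ = I * (K * lam ^ 2 * (b - a)) := by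
      rw [mul_pow, Real.sq_sqrt (by positivity)]; field_simp
  nlinarith [show 0 ≤ K * lam ^ 2 * (b - a) by positivity]
end
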